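/- arXiv:1907.09212 — 5 statements merged into one kernel-verified Lean document; each statement's English description precedes it below -/
import Mathlib

section
/- Let α be a type of atoms and let G be a ground program over α. If E₁ ⊆ G and E₂ ⊆ G are both embedding programs for G, then E = E₁ ∩ E₂ is an embedding program for G. -/
structure GroundRule (α : Type*) where
  head : Set α
  posBody : Set α
  negBody : Set α

namespace GroundRule

variable {α : Type*}

/-- `Heads R` is the set of all head atoms of rules in `R`. -/
def Heads (R : Set (GroundRule α)) : Set α := ⋃ r ∈ R, r.head

/-- `R` body-embeds `r` (written `R ⊢_b r`). -/
def BodyEmbeds (R : Set (GroundRule α)) (r : GroundRule α) : Prop :=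
  ∀ a ∈ r.posBody, ∃ r' ∈ R, a ∈ r'.head

/-- `R` embeds `r` (written `R ⊢ r`): either `R` does not body-embed `r`,
or `R` head-embeds `r` (i.e. `r ∈ R`). -/
def Embeds (R : Set (GroundRule α)) (r : GroundRule α) : Prop :=
  ¬ BodyEmbeds R r ∨ r ∈ R

/-- `E` is an embedding program for the ground program `G`. -/
def IsEmbeddingProgram (G E : Set (GroundRule α)) : Prop :=
  E ⊆ G ∧ ∀ r ∈ G, Embeds E r

/-- The fact rule `a.` for an atom `a`. -/
def factRule (a : α) : GroundRule α := ⟨{a}, ∅, ∅⟩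

/-- `factRules F` is the set of fact rules `{a. : a ∈ F}`. -/
def factRules (F : Set α) : Set (GroundRule α) := factRule '' F

/-- The instantiation operator `Inst(P, S) = {r ∈ P : B⁺(r) ⊆ S}`. -/
def Inst (P : Set (GroundRule α)) (S : Set α) : Set (GroundRule α) :=
  {r ∈ P | r.posBody ⊆ S}

/-- Interpretation `I` satisfies the body of `r`. -/
def SatBody (I : Set α) (r : GroundRule α) : Prop :=
  r.posBody ⊆ I ∧ r.negBody ∩ I = ∅

/-- Interpretation `I` satisfies the rule `r`. -/
def SatRule (I : Set α) (r : GroundRule α) : Prop :=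
  ¬ SatBody I r ∨ (r.head ∩ I).Nonempty

/-- `I` is a model of the ground program `G`. -/
def IsModel (I : Set α) (G : Set (GroundRule α)) : Prop :=
  ∀ r ∈ G, SatRule I r

/-- FLP reduct `G^I = {r ∈ G : I ⊨ B(r)}`. -/
def reduct (G : Set (GroundRule α)) (I : Set α) : Set (GroundRule α) :=
  {r ∈ G | SatBody I r}

/-- `A` is an answer set of `G`: `A` is a model of `G^A` minimal w.r.t. `⊆`. -/
def IsAnswerSet (G : Set (GroundRule α)) (A : Set α) : Prop :=
  IsModel A (reduct G A) ∧ ∀ B, B ⊂ A → ¬ IsModel B (reduct G A)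

/-- `AS G` is the set of all answer sets of `G`. -/
def AS (G : Set (GroundRule α)) : Set (Set α) := {A | IsAnswerSet G A}

theorem Heads_mono {R R' : Set (GroundRule α)} (h : R ⊆ R') : Heads R ⊆ Heads R' := by
  intro a ha
  simp only [Heads, Set.mem_iUnion, exists_prop] at ha ⊢
  obtain ⟨r, hr, har⟩ := ha
  exact ⟨r, h hr, har⟩

/-- The monotone operator `R ↦ Inst(P, Heads(R) ∪ F)`. -/
def InstOp (P : Set (GroundRule α)) (F : Set α) :
    Set (GroundRule α) →o Set (GroundRule α) where
  toFun R := Inst P (Heads R ∪ F)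
  monotone' := fun _ _ h _ hr =>
    ⟨hr.1, hr.2.trans (Set.union_subset_union_left F (Heads_mono h))⟩

/-- `Inst^∞(P, F)`: the least fixpoint of `R ↦ Inst(P, Heads(R) ∪ F)`. -/
def InstInf (P : Set (GroundRule α)) (F : Set α) : Set (GroundRule α) :=
  OrderHom.lfp (InstOp P F)

end GroundRule

open GroundRule

namespace GroundRule

variable {α : Type*} {R R' E₁ E₂ : Set (GroundRule α)} {r : GroundRule α}

theorem BodyEmbeds.mono (h : R ⊆ R') (hb : BodyEmbeds R r) : BodyEmbeds R' r := fun a ha =>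
  let ⟨r', hr', har'⟩ := hb a ha
  ⟨r', h hr', har'⟩

theorem Embeds.inter (h₁ : Embeds E₁ r) (h₂ : Embeds E₂ r) : Embeds (E₁ ∩ E₂) r := by
  by_cases hb : BodyEmbeds (E₁ ∩ E₂) r
  · exact .inr ⟨h₁.resolve_left (not_not_intro (hb.mono Set.inter_subset_left)),
      h₂.resolve_left (not_not_intro (hb.mono Set.inter_subset_right))⟩
  · exact .inl hb

end GroundRule

/-- the intersection of two embedding programs for `G`
is an embedding program for `G`. -/
theorem intersection_embedding {α : Type*} (G E₁ E₂ : Set (GroundRule α))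
    (h₁ : IsEmbeddingProgram G E₁) (h₂ : IsEmbeddingProgram G E₂) :
    IsEmbeddingProgram G (E₁ ∩ E₂) :=
  ⟨Set.inter_subset_left.trans h₁.1, fun r hr => (h₁.2 r hr).inter (h₂.2 r hr)⟩
end

section
/- Let α be a type of atoms, let P be a ground program over α, let F ⊆ α be a set of atoms (facts), and let F̂ denote the set of fact rules {a. : a ∈ F}. Let G = P ∪ F̂, and let T̄ be the monotone operator on subsets of G defined by T̄(R) = Inst(P, Heads(R)) ∪ F̂, where Inst(P, S) = {r ∈ P : B⁺(r) ⊆ S}. Then the least fixpoint of T̄ (with respect to set inclusion) equals the intersection of all embedding programs for G. -/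
open GroundRule

/-- The monotone operator `T̄(R) = Inst(P, Heads(R)) ∪ F̂`. -/
def TBar {α : Type*} (P : Set (GroundRule α)) (F : Set α) :
    Set (GroundRule α) →o Set (GroundRule α) where
  toFun R := Inst P (Heads R) ∪ factRules F
  monotone' := fun _ _ h =>
    Set.union_subset_union_left _ (fun _ hr => ⟨hr.1, hr.2.trans (Heads_mono h)⟩)

/-!
Every embedding program `E` for `G = P ∪ F̂` is a pre-fixpoint of `T̄`: a rule of `G` whose
positive body is covered by `Heads E` is body-embedded by `E`, hence lies in `E`, and fact rules
have empty body. Conversely the least fixpoint of `T̄` is itself an embedding program, so it is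
the least element of the family of embedding programs, i.e. its intersection.
-/

namespace GroundRule

variable {α : Type*}

theorem mem_Heads {R : Set (GroundRule α)} {a : α} : a ∈ Heads R ↔ ∃ r ∈ R, a ∈ r.head := by
  simp [Heads]

theorem bodyEmbeds_iff_posBody_subset_Heads {R : Set (GroundRule α)} {r : GroundRule α} :
    BodyEmbeds R r ↔ r.posBody ⊆ Heads R := by
  simp only [BodyEmbeds, Set.subset_def, mem_Heads]

theorem bodyEmbeds_factRule (R : Set (GroundRule α)) (a : α) : BodyEmbeds R (factRule a) := by
  simp [BodyEmbeds, factRule]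

theorem Embeds.mem_of_bodyEmbeds {R : Set (GroundRule α)} {r : GroundRule α} (h : Embeds R r)
    (hb : BodyEmbeds R r) : r ∈ R :=
  h.resolve_left (not_not_intro hb)

end GroundRule

theorem TBar_le_of_forall_embeds {α : Type*} {P E : Set (GroundRule α)} {F : Set α}
    (h : ∀ r ∈ P ∪ factRules F, Embeds E r) : TBar P F E ≤ E := by
  rintro r (⟨hrP, hbody⟩ | hrF)
  · exact (h r (.inl hrP)).mem_of_bodyEmbeds (bodyEmbeds_iff_posBody_subset_Heads.2 hbody)
  · obtain ⟨a, ha, rfl⟩ := hrF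
    exact (h _ (.inr ⟨a, ha, rfl⟩)).mem_of_bodyEmbeds (bodyEmbeds_factRule E a)

theorem isEmbeddingProgram_of_TBar_eq {α : Type*} {P L : Set (GroundRule α)} {F : Set α}
    (hL : TBar P F L = L) : IsEmbeddingProgram (P ∪ factRules F) L := by
  refine ⟨hL.ge.trans (Set.union_subset_union_left _ fun _ hr => hr.1), ?_⟩
  rintro r (hrP | hrF)
  · by_cases hb : BodyEmbeds L r
    · exact Or.inr (hL.le (Or.inl ⟨hrP, bodyEmbeds_iff_posBody_subset_Heads.1 hb⟩))
    · exact Or.inl hb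
  · exact Or.inr (hL.le (Or.inr hrF))

/-- the least fixpoint of `T̄` equals the intersection of all
embedding programs for `G = P ∪ F̂`. -/
theorem lfp_eq_sInter_embeddings {α : Type*} (P : Set (GroundRule α)) (F : Set α) :
    OrderHom.lfp (TBar P F) =
      ⋂₀ {E | IsEmbeddingProgram (P ∪ factRules F) E} := by
  have hlfp : IsEmbeddingProgram (P ∪ factRules F) (OrderHom.lfp (TBar P F)) :=
    isEmbeddingProgram_of_TBar_eq (OrderHom.map_lfp _)
  have hleast : IsLeast {E | IsEmbeddingProgram (P ∪ factRules F) E} (OrderHom.lfp (TBar P F)) :=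
    ⟨hlfp, fun _ hE => OrderHom.lfp_le _ (TBar_le_of_forall_embeds hE.2)⟩
  exact hleast.isGLB.sInf_eq.symm
end

section
/- Let α be a type of atoms and let G be a ground program over α in which every rule has a finite positive body. Let A be an answer set of G. Then there exists a function stage from atoms of A to ℕ such that for every a ∈ A there is a rule r ∈ G with: (i) a ∈ H(r), (ii) A satisfies the body of r (that is, B⁺(r) ⊆ A and B⁻(r) ∩ A = ∅), and (iii) for every atom b ∈ B⁺(r), stage(b) < stage(a). -/
open GroundRule

lemma finite_subset_mono_iUnion {α : Type*} {S : ℕ → Set α} (hmono : Monotone S)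
    {t : Set α} (ht : t.Finite) (h : t ⊆ ⋃ n, S n) : ∃ n, t ⊆ S n := by
  induction t, ht using Set.Finite.induction_on with
  | empty => exact ⟨0, by simp⟩
  | insert ha hs ih =>
    rename_i a s
    obtain ⟨n, hn⟩ := ih (fun x hx => h (Set.mem_insert_of_mem a hx))
    obtain ⟨m, hm⟩ := Set.mem_iUnion.mp (h (Set.mem_insert a s))
    exact ⟨max n m, Set.insert_subset (hmono (le_max_right n m) hm)
      (hn.trans (hmono (le_max_left n m)))⟩

/-- every answer set `A` of a ground program `G` with finite positive
bodies admits a stage function: each `a ∈ A` is head of a rule `r ∈ G` whose body is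
satisfied by `A` and whose positive body atoms all have strictly smaller stage. -/
theorem exists_stage_function {α : Type*} (G : Set (GroundRule α))
    (hfin : ∀ r ∈ G, r.posBody.Finite)
    (A : Set α) (hA : IsAnswerSet G A) :
    ∃ stage : α → ℕ, ∀ a ∈ A, ∃ r ∈ G,
      a ∈ r.head ∧ SatBody A r ∧ ∀ b ∈ r.posBody, stage b < stage a := by
  classical
  obtain ⟨hmodel, hmin⟩ := hA
  let S : ℕ → Set α := fun n => Nat.rec ∅
    (fun _ Sn => Sn ∪ {a | a ∈ A ∧ ∃ r ∈ reduct G A, a ∈ r.head ∧ r.posBody ⊆ Sn}) n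
  have hS0 : S 0 = ∅ := rfl
  have hSsucc : ∀ n, S (n+1) =
      S n ∪ {a | a ∈ A ∧ ∃ r ∈ reduct G A, a ∈ r.head ∧ r.posBody ⊆ S n} := fun n => rfl
  have hmono : Monotone S := monotone_nat_of_le_succ fun n => by
    rw [hSsucc]; exact Set.subset_union_left
  have hSA : ∀ n, S n ⊆ A := by
    intro n; induction n with
    | zero => rw [hS0]; exact Set.empty_subset A
    | succ n ih => rw [hSsucc]; exact Set.union_subset ih fun a ha => ha.1
  have hUA : (⋃ n, S n) ⊆ A := Set.iUnion_subset hSA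
  have hUmodel : IsModel (⋃ n, S n) (reduct G A) := by
    intro r hr
    by_cases hb : SatBody (⋃ n, S n) r
    · right
      have hAhead : (r.head ∩ A).Nonempty := by
        rcases hmodel r hr with h | h
        · exact absurd hr.2 h
        · exact h
      obtain ⟨a, haH, haA⟩ := hAhead
      obtain ⟨n, hn⟩ := finite_subset_mono_iUnion hmono (hfin r hr.1) hb.1
      exact ⟨a, haH, Set.mem_iUnion.mpr ⟨n+1, by
        rw [hSsucc]; exact Or.inr ⟨haA, r, hr, haH, hn⟩⟩⟩
    · exact Or.inl hb
  have hUeq : (⋃ n, S n) = A := by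
    by_contra hne
    exact hmin _ (Set.ssubset_iff_subset_ne.mpr ⟨hUA, hne⟩) hUmodel
  refine ⟨fun a => sInf {n | a ∈ S n}, fun a ha => ?_⟩
  have hex : {n | a ∈ S n}.Nonempty := Set.mem_iUnion.mp (hUeq ▸ ha)
  have hma : a ∈ S (sInf {n | a ∈ S n}) := Nat.sInf_mem hex
  obtain ⟨k, hk⟩ : ∃ k, sInf {n | a ∈ S n} = k + 1 := by
    refine Nat.exists_eq_succ_of_ne_zero fun h0 => ?_
    rw [h0, hS0] at hma; exact hma
  have hak : a ∉ S k := Nat.notMem_of_lt_sInf (show k < sInf {n | a ∈ S n} by omega)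
  have hma' : a ∈ S (k + 1) := hk ▸ hma
  rw [hSsucc] at hma'
  rcases hma' with h | h
  · exact absurd h hak
  obtain ⟨-, r, hr, hhead, hpos⟩ := h
  refine ⟨r, hr.1, hhead, hr.2, fun b hb => ?_⟩
  have h1 : sInf {n | b ∈ S n} ≤ k := Nat.sInf_le (hpos hb)
  show sInf {n | b ∈ S n} < sInf {n | a ∈ S n}
  omega
end

section
/- Let α be a type of atoms, let G be a ground program over α in which every rule has a finite positive body, let E ⊆ G be an embedding program for G, and let A be an answer set of G. Then for every atom a ∈ A there exists a rule r ∈ E with a ∈ H(r) and A ⊨ B(r); consequently A ⊆ Heads(E). -/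
open GroundRule

/-!
The atoms of `A` supported by a rule of `E` whose body holds in `A` already form a model of the
reduct `G^A`, so by minimality of the answer set `A` they are all of `A`.
-/

namespace GroundRule

variable {α : Type*}

theorem IsAnswerSet.eq_of_subset_of_isModel {G : Set (GroundRule α)} {A C : Set α}
    (hA : IsAnswerSet G A) (hCA : C ⊆ A) (hC : IsModel C (reduct G A)) : C = A :=
  by_contra fun hne => hA.2 C (hCA.ssubset_of_ne hne) hC

def supportedAtoms (E : Set (GroundRule α)) (A : Set α) : Set α :=
  {a ∈ A | ∃ r ∈ E, a ∈ r.head ∧ SatBody A r}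

theorem supportedAtoms_subset (E : Set (GroundRule α)) (A : Set α) : supportedAtoms E A ⊆ A :=
  fun _ ha => ha.1

theorem supportedAtoms_subset_Heads (E : Set (GroundRule α)) (A : Set α) :
    supportedAtoms E A ⊆ Heads E := fun _ ⟨_, r, hrE, har, _⟩ => mem_Heads.2 ⟨r, hrE, har⟩

/-- A rule of `G^A` whose body holds in the supported atoms is body-embedded by `E`, so it lies in
`E`; a head atom of it in `A` is then supported by the rule itself. -/
theorem isModel_supportedAtoms {G E : Set (GroundRule α)} {A : Set α}
    (hE : ∀ r ∈ G, Embeds E r) (hA : IsModel A (reduct G A)) :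
    IsModel (supportedAtoms E A) (reduct G A) := by
  rintro r ⟨hrG, hbodyA⟩
  by_cases hbody : SatBody (supportedAtoms E A) r
  · have hrE : r ∈ E := (hE r hrG).mem_of_bodyEmbeds <|
      bodyEmbeds_iff_posBody_subset_Heads.2 (hbody.1.trans (supportedAtoms_subset_Heads E A))
    obtain ⟨b, hbr, hbA⟩ := (hA r ⟨hrG, hbodyA⟩).resolve_left (not_not_intro hbodyA)
    exact Or.inr ⟨b, hbr, hbA, r, hrE, hbr, hbodyA⟩
  · exact Or.inl hbody

end GroundRule

theorem answerSet_supported_by_embedding_general {α : Type*} (G E : Set (GroundRule α))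
    (hE : IsEmbeddingProgram G E)
    (A : Set α) (hA : IsAnswerSet G A) :
    (∀ a ∈ A, ∃ r ∈ E, a ∈ r.head ∧ SatBody A r) ∧ A ⊆ Heads E := by
  have hsupp : supportedAtoms E A = A :=
    hA.eq_of_subset_of_isModel (supportedAtoms_subset E A) (isModel_supportedAtoms hE.2 hA.1)
  refine ⟨fun a ha => ?_, hsupp ▸ supportedAtoms_subset_Heads E A⟩
  rw [← hsupp] at ha
  exact ha.2

/-- if `E` is an embedding program for `G` and `A` an answer set of `G`,
then every `a ∈ A` is head of a rule of `E` whose body is satisfied by `A`;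
consequently `A ⊆ Heads(E)`. -/
theorem answerSet_supported_by_embedding {α : Type*} (G E : Set (GroundRule α))
    (hfin : ∀ r ∈ G, r.posBody.Finite)
    (hE : IsEmbeddingProgram G E)
    (A : Set α) (hA : IsAnswerSet G A) :
    (∀ a ∈ A, ∃ r ∈ E, a ∈ r.head ∧ SatBody A r) ∧ A ⊆ Heads E :=
  answerSet_supported_by_embedding_general G E hE A hA
end

section
/- Let α be a type of atoms, let P be a ground program over α in which every rule has a finite positive body, let F ⊆ α be a set of atoms (facts), and let F̂ denote the set of fact rules {a. : a ∈ F}. Let Inst^∞(P,F) denote the least fixpoint of the monotone operator R ↦ Inst(P, Heads(R) ∪ F) on subsets of P, where Inst(P, S) = {r ∈ P : B⁺(r) ⊆ S}. Then AS(P ∪ F̂) = AS(Inst^∞(P,F) ∪ F̂), i.e., the program consisting of the least-fixpoint instantiation together with the facts has the same answer sets as the full ground program with the facts. -/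
open GroundRule

/-!
An answer set is supported: if a set of atoms `S` is closed under the rules of a program (every
rule whose positive body lies in `S` has its head in `S`), then intersecting an answer set `A`
with `S` still gives a model of the reduct, so by minimality `A ⊆ S`. The atoms
`Heads(Inst^∞(P,F)) ∪ F` form such a set for `P ∪ F̂` and for `Inst^∞(P,F) ∪ F̂`, and on
interpretations inside it the two programs have the same reduct, because a rule of `P` whose
positive body holds there already belongs to the fixpoint.
-/

namespace GroundRule

variable {α : Type*}

def ClosedUnder (G : Set (GroundRule α)) (S : Set α) : Prop :=
  ∀ r ∈ G, r.posBody ⊆ S → r.head ⊆ S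

theorem ClosedUnder.mono {G G' : Set (GroundRule α)} {S : Set α} (hS : ClosedUnder G S)
    (h : G' ⊆ G) : ClosedUnder G' S :=
  fun r hr => hS r (h hr)

theorem IsAnswerSet.subset_of_closedUnder {G : Set (GroundRule α)} {A S : Set α}
    (hA : IsAnswerSet G A) (hS : ClosedUnder G S) : A ⊆ S := by
  have hmodel : IsModel (A ∩ S) (reduct G A) := by
    intro r hr
    refine (em' (SatBody (A ∩ S) r)).imp_right fun hb => ?_
    have hhead : r.head ⊆ S := hS r hr.1 (hb.1.trans Set.inter_subset_right)
    obtain ⟨a, haH, haA⟩ := (hA.1 r hr).resolve_left (not_not.2 hr.2)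
    exact ⟨a, haH, haA, hhead haH⟩
  by_contra hAS
  exact hA.2 _ ⟨Set.inter_subset_left, fun h => hAS fun _ ha => (h ha).2⟩ hmodel

theorem reduct_eq_of_subset {G G' : Set (GroundRule α)} {A : Set α} (hG' : G' ⊆ G)
    (hG : ∀ r ∈ G, r.posBody ⊆ A → r ∈ G') : reduct G A = reduct G' A :=
  Set.ext fun r => ⟨fun hr => ⟨hG r hr.1 hr.2.1, hr.2⟩, fun hr => ⟨hG' hr.1, hr.2⟩⟩

theorem isAnswerSet_iff_of_closedUnder {G G' : Set (GroundRule α)} {S : Set α}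
    (hS : ClosedUnder G S) (hG' : G' ⊆ G) (hG : ∀ r ∈ G, r.posBody ⊆ S → r ∈ G')
    (A : Set α) : IsAnswerSet G A ↔ IsAnswerSet G' A := by
  have hred : A ⊆ S → reduct G A = reduct G' A := fun hAS =>
    reduct_eq_of_subset hG' fun r hr hb => hG r hr (hb.trans hAS)
  constructor
  · intro hA
    rwa [IsAnswerSet, ← hred (hA.subset_of_closedUnder hS)]
  · intro hA
    rwa [IsAnswerSet, hred (hA.subset_of_closedUnder (hS.mono hG'))]

theorem head_subset_heads {R : Set (GroundRule α)} {r : GroundRule α} (hr : r ∈ R) :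
    r.head ⊆ Heads R :=
  Set.subset_biUnion_of_mem (u := fun r : GroundRule α => r.head) hr

theorem inst_instInf (P : Set (GroundRule α)) (F : Set α) :
    Inst P (Heads (InstInf P F) ∪ F) = InstInf P F :=
  OrderHom.map_lfp (InstOp P F)

theorem instInf_subset (P : Set (GroundRule α)) (F : Set α) : InstInf P F ⊆ P := by
  rw [← inst_instInf]
  exact Set.sep_subset _ _

theorem mem_instInf {P : Set (GroundRule α)} {F : Set α} {r : GroundRule α} (hr : r ∈ P)
    (hb : r.posBody ⊆ Heads (InstInf P F) ∪ F) : r ∈ InstInf P F := by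
  rw [← inst_instInf]
  exact ⟨hr, hb⟩

theorem closedUnder_instInf (P : Set (GroundRule α)) (F : Set α) :
    ClosedUnder (P ∪ factRules F) (Heads (InstInf P F) ∪ F) := by
  rintro r (hr | ⟨a, ha, rfl⟩) hb
  · exact (head_subset_heads (mem_instInf hr hb)).trans Set.subset_union_left
  · exact Set.singleton_subset_iff.2 (Or.inr ha)

end GroundRule

theorem answerSets_instInf_general {α : Type*} (P : Set (GroundRule α)) (F : Set α) :
    AS (P ∪ factRules F) = AS (InstInf P F ∪ factRules F) :=
  Set.ext <| isAnswerSet_iff_of_closedUnder (closedUnder_instInf P F)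
    (Set.union_subset_union_left _ (instInf_subset P F))
    fun _ hr hb => hr.imp (fun hP => mem_instInf hP hb) id

/-- `AS(P ∪ F̂) = AS(Inst^∞(P,F) ∪ F̂)`. -/
theorem answerSets_instInf {α : Type*} (P : Set (GroundRule α)) (F : Set α)
    (hfin : ∀ r ∈ P, r.posBody.Finite) :
    AS (P ∪ factRules F) = AS (InstInf P F ∪ factRules F) :=
  answerSets_instInf_general P F
end
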